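/- arXiv:1011.2841 — 7 statements merged into one kernel-verified Lean document; each statement's English description precedes it below -/
import Mathlib

section
/- For any permutation σ of {1,…,N} and commuting nonzero variables ξ_1,…,ξ_N, the product over all inversions (β,α) of σ (pairs with β>α where β appears before α in σ) of ξ_β/ξ_α equals ∏_{i=1}^{N} ξ_{σ(i)}^{σ(i)-i}. -/
/-!
Splitting each factor `ξ (σ i) / ξ (σ j)`, the entry `σ i` at position `i` occurs in the
numerator once for every later smaller entry and in the denominator once for every earlier
larger entry. Among the `σ i` entries smaller than `σ i`, those not later are earlier, and
among the `i` earlier entries, those not smaller are larger; so the difference of the two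
counts is `σ i - i`.
-/

open Finset

section
variable {α : Type*} [Fintype α] (r : α → α → Prop) [DecidableRel r]

theorem prod_filter_rel_fst {M : Type*} [CommMonoid M] (g : α → M) :
    ∏ p ∈ univ.filter (fun p : α × α => r p.1 p.2), g p.1 = ∏ i, g i ^ #{j | r i j} := by
  rw [prod_filter, Fintype.prod_prod_type]
  refine prod_congr rfl fun i _ => ?_
  rw [prod_ite, prod_const_one, mul_one]
  exact prod_const (g i)

theorem prod_filter_rel_snd {M : Type*} [CommMonoid M] (g : α → M) :
    ∏ p ∈ univ.filter (fun p : α × α => r p.1 p.2), g p.2 = ∏ i, g i ^ #{j | r j i} := by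
  rw [prod_filter, Fintype.prod_prod_type_right]
  refine prod_congr rfl fun i _ => ?_
  rw [prod_ite, prod_const_one, mul_one]
  exact prod_const (g i)

theorem prod_filter_rel_div {G₀ : Type*} [CommGroupWithZero G₀] (f : α → G₀)
    (hf : ∀ i, f i ≠ 0) :
    ∏ p ∈ univ.filter (fun p : α × α => r p.1 p.2), f p.1 / f p.2 =
      ∏ i, f i ^ ((#{j | r i j} : ℤ) - #{j | r j i}) := by
  rw [prod_div_distrib, prod_filter_rel_fst, prod_filter_rel_snd, ← prod_div_distrib]
  refine prod_congr rfl fun i _ => ?_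
  rw [zpow_sub₀ (hf i), zpow_natCast, zpow_natCast]

end

theorem Function.Injective.card_later_smaller_add_card_lt {α β : Type*} [Fintype α]
    [LinearOrder α] [LinearOrder β] {f : α → β} (hf : Function.Injective f) (i : α) :
    #{j | i < j ∧ f j < f i} + #{j | j < i} = #{j | f j < f i} + #{j | j < i ∧ f i < f j} := by
  have hsmaller := card_filter_add_card_filter_not (s := {j | f j < f i}) (fun j => j < i)
  have hearlier := card_filter_add_card_filter_not (s := {j | j < i}) (fun j => f j < f i)
  simp only [filter_filter] at hsmaller hearlier
  have hlater : #{j | f j < f i ∧ ¬ j < i} = #{j | i < j ∧ f j < f i} := by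
    refine congrArg card (filter_congr fun j _ =>
      ⟨fun ⟨hlt, hnot⟩ => ?_, fun ⟨hij, hlt⟩ => ⟨hlt, not_lt.2 hij.le⟩⟩)
    exact ⟨lt_of_le_of_ne (not_lt.1 hnot) (by rintro rfl; exact lt_irrefl _ hlt), hlt⟩
  have hlarger : #{j | j < i ∧ ¬ f j < f i} = #{j | j < i ∧ f i < f j} := by
    refine congrArg card (filter_congr fun j _ => and_congr_right fun hji => ?_)
    exact not_lt.trans (le_iff_lt_or_eq.trans (or_iff_left (hf.ne hji.ne')))
  have hboth : #{j | f j < f i ∧ j < i} = #{j | j < i ∧ f j < f i} := by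
    simp only [and_comm]
  omega

theorem Equiv.card_filter_apply_lt {α β : Type*} [Fintype α] [LinearOrder β]
    [LocallyFiniteOrderBot β] (e : α ≃ β) (b : β) :
    #{j | e j < b} = #(Iio b) := by
  rw [← card_map e.symm.toEmbedding]
  congr 1
  ext j
  simp

/-- For any permutation σ of Fin N and nonzero field elements ξ_1,…,ξ_N, the product
over all inversions (pairs of positions i<j with σ i > σ j, the inversion being the
pair of entries (σ i, σ j)) of ξ_{σ i}/ξ_{σ j} equals ∏ i, ξ_{σ i}^{σ i - i}. -/
theorem inversion_product_eq {K : Type*} [Field K] (N : ℕ)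
    (σ : Equiv.Perm (Fin N)) (ξ : Fin N → K) (hξ : ∀ i, ξ i ≠ 0) :
    ∏ p ∈ Finset.univ.filter
        (fun p : Fin N × Fin N => p.1 < p.2 ∧ σ p.2 < σ p.1),
      ξ (σ p.1) / ξ (σ p.2)
      = ∏ i : Fin N, ξ (σ i) ^ ((σ i : ℤ) - (i : ℤ)) := by
  refine (prod_filter_rel_div (fun i j => i < j ∧ σ j < σ i) (fun i => ξ (σ i))
    fun i => hξ (σ i)).trans (prod_congr rfl fun i _ => congrArg _ ?_)
  have hcount := σ.injective.card_later_smaller_add_card_lt i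
  rw [σ.card_filter_apply_lt, Fin.card_Iio, filter_gt_eq_Iio, Fin.card_Iio] at hcount
  omega
end

section
/- Let x_1 ≤ x_2 ≤ ⋯ ≤ x_N and y_1 ≤ y_2 ≤ ⋯ ≤ y_N be integers, σ ∈ S_N, and suppose σ(i) = α, σ(i+1) = β, σ(j) = γ with j < i and γ > α, γ > β. Then the exponents x_j - x_i + y_α - y_γ + γ - α + i - j and x_j - x_{i+1} + y_β - y_γ + γ - β + (i+1) - j are both ≥ 2. -/
/-- Exponent bound (AZRP, Lemma 3.6(ii)): for weakly increasing integer sequences x, y,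
a permutation σ with σ i = α, σ (i+1) = β, σ j = γ, j < i, and γ > α, γ > β, the
exponents of ξ_α and ξ_β in h_σ^γ (and h_σ'^γ) are at least 2. -/
theorem azrp_exponent_ge_two (x y : ℕ → ℤ) (hx : Monotone x) (hy : Monotone y)
    (σ : Equiv.Perm ℕ) (i j α β γ : ℕ)
    (hji : j < i)
    (hα : σ i = α) (hβ : σ (i + 1) = β) (hγ : σ j = γ)
    (hγα : α < γ) (hγβ : β < γ) :
    2 ≤ x i - x j + y γ - y α + (γ : ℤ) - (α : ℤ) + (i : ℤ) - (j : ℤ) ∧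
    2 ≤ x (i + 1) - x j + y γ - y β + (γ : ℤ) - (β : ℤ) + ((i : ℤ) + 1) - (j : ℤ) := by
  have h1 := hx hji.le
  have h2 := hx (Nat.le_succ_of_le hji.le)
  have h3 := hy hγα.le
  have h4 := hy hγβ.le
  have : (α:ℤ) + 1 ≤ γ := by exact_mod_cast hγα
  have : (β:ℤ) + 1 ≤ γ := by exact_mod_cast hγβ
  have : (j:ℤ) + 1 ≤ i := by exact_mod_cast hji
  constructor <;> linarith
end

section
/- For every N ≥ 2, the set S_N \ {id} can be written as a disjoint union of blocks, each block being either a singleton {σ} where σ satisfies: some entry β appears in position β+1 with all following entries greater than β; or a pair {σ, σ'} where σ and σ' differ only by interchanging two adjacent entries α, β and there is an entry γ appearing to the right of both with γ < α and γ < β. -/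
/-- σ satisfies the "singleton" condition: some entry b appears at position b + 1
(zero-based version of "β appears in position β+1") and all entries following b
are greater than b. -/
def SingleType {N : ℕ} (σ : Equiv.Perm (Fin N)) : Prop :=
  ∃ p b : Fin N, (p : ℕ) = (b : ℕ) + 1 ∧ σ p = b ∧ ∀ k, p < k → b < σ k

/-- σ and σ' differ only by interchanging two adjacent entries (at positions i, i+1),
and some entry γ appears at a position to the right of both which is smaller than
both interchanged entries. -/
def PairType {N : ℕ} (σ σ' : Equiv.Perm (Fin N)) : Prop :=
  ∃ i i' j : Fin N, (i' : ℕ) = (i : ℕ) + 1 ∧ σ' = σ * Equiv.swap i i' ∧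
    (i' : ℕ) < (j : ℕ) ∧ σ j < σ i ∧ σ j < σ i'


/-! The blocks are the orbits of an involution `swapLeftmost` on permutations: call `n` a swap
position of `σ` if the entries at positions `n` and `n + 1` both exceed some later entry, and let
`swapLeftmost σ` interchange the entries at the leftmost swap position. The interchange neither
destroys that position nor creates one further left, so the map is an involution whose
non-trivial orbits are pairs of the second type. A fixed point `σ ≠ 1` has no swap position; if
`p` is its first non-fixed point, every entry to the right of `p` except `p` itself exceeds `p`,
so `p` must stand at position `p + 1`, as otherwise the two positions before it would form a swap
position. -/

open Equiv Function

section InvolutionBlocks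

variable {α : Type*} [DecidableEq α] {f : α → α}

theorem Function.Involutive.pair_eq_of_mem_pair (hf : Involutive f) {x y : α}
    (hy : y ∈ ({x, f x} : Finset α)) : ({y, f y} : Finset α) = {x, f x} := by
  rcases Finset.mem_insert.1 hy with rfl | hy
  · rfl
  · rw [Finset.mem_singleton.1 hy, hf x, Finset.pair_comm]

theorem Function.Involutive.pairwiseDisjoint_image_pair (hf : Involutive f) (s : Finset α) :
    (↑(s.image fun x => ({x, f x} : Finset α)) : Set (Finset α)).PairwiseDisjoint id := by
  intro B hB B' hB' hne
  obtain ⟨x, -, rfl⟩ := Finset.mem_image.1 hB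
  obtain ⟨x', -, rfl⟩ := Finset.mem_image.1 hB'
  refine Finset.disjoint_left.2 fun y hy hy' => hne ?_
  rw [← hf.pair_eq_of_mem_pair hy, hf.pair_eq_of_mem_pair hy']

theorem Finset.biUnion_image_pair_of_mapsTo {s : Finset α} (hs : Set.MapsTo f s s) :
    (s.image fun x => ({x, f x} : Finset α)).biUnion id = s := by
  ext y
  simp only [Finset.mem_biUnion, Finset.mem_image, id_eq]
  constructor
  · rintro ⟨_, ⟨x, hx, rfl⟩, hy⟩
    rcases Finset.mem_insert.1 hy with rfl | hy
    · exact hx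
    · exact Finset.mem_singleton.1 hy ▸ hs hx
  · exact fun hy => ⟨_, ⟨y, hy, rfl⟩, Finset.mem_insert_self _ _⟩

end InvolutionBlocks

theorem Equiv.Perm.le_apply_of_forall_lt_apply_eq {α : Type*} [LinearOrder α] {σ : Perm α}
    {p : α} (hfix : ∀ x < p, σ x = x) {k : α} (hk : p ≤ k) : p ≤ σ k := by
  by_contra! hlt
  have hk' : σ k = k := σ.injective (hfix _ hlt)
  exact absurd hk (not_le.2 (hk' ▸ hlt))

namespace PermPartition

variable {N : ℕ} {σ : Perm (Fin N)} {m n : ℕ} {i i' : Fin N}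

def IsSwapPos (σ : Perm (Fin N)) (n : ℕ) : Prop :=
  ∃ i i' j : Fin N,
    (i : ℕ) = n ∧ (i' : ℕ) = n + 1 ∧ (i' : ℕ) < j ∧ σ j < σ i ∧ σ j < σ i'

def IsLeftmostSwapPos (σ : Perm (Fin N)) (n : ℕ) : Prop :=
  IsSwapPos σ n ∧ ∀ m < n, ¬IsSwapPos σ m

theorem IsSwapPos.add_one_lt (h : IsSwapPos σ n) : n + 1 < N := by
  obtain ⟨-, i', -, -, hi', -⟩ := h
  exact hi' ▸ i'.isLt

theorem not_isSwapPos_one : ¬IsSwapPos (1 : Perm (Fin N)) n := by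
  rintro ⟨i, i', j, hi, hi', hj, hji, -⟩
  rw [Perm.one_apply, Perm.one_apply, Fin.lt_def] at hji
  omega

theorem exists_isLeftmostSwapPos (h : ∃ n, IsSwapPos σ n) : ∃ n, IsLeftmostSwapPos σ n := by
  classical
  exact ⟨Nat.find h, Nat.find_spec h, fun _ => Nat.find_min h⟩

theorem IsLeftmostSwapPos.unique (h : IsLeftmostSwapPos σ n) (h' : IsLeftmostSwapPos σ m) :
    m = n := by
  by_contra hne
  rcases Nat.lt_or_gt_of_ne hne with hlt | hlt
  · exact h.2 m hlt h'.1
  · exact h'.2 n hlt h.1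

theorem isSwapPos_mul_swap (hi : (i : ℕ) = n) (hi' : (i' : ℕ) = n + 1) (h : IsSwapPos σ n) :
    IsSwapPos (σ * swap i i') n := by
  obtain ⟨k, k', j, hk, hk', hj, hjk, hjk'⟩ := h
  obtain rfl : k = i := Fin.ext (by omega)
  obtain rfl : k' = i' := Fin.ext (by omega)
  have hjne : j ≠ k ∧ j ≠ k' := ⟨fun e => by subst e; omega, fun e => by subst e; omega⟩
  refine ⟨k, k', j, hk, hk', by omega, ?_, ?_⟩ <;>
    simpa [Perm.mul_apply, swap_apply_of_ne_of_ne hjne.1 hjne.2]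

/-- Positions `m, m + 1` lie left of the swapped ones, and the entries after `m + 1` are only
permuted among themselves. -/
theorem IsSwapPos.of_mul_swap_of_add_one_lt (hi : (i : ℕ) = n) (hi' : (i' : ℕ) = n + 1)
    (hmn : m + 1 < n) (h : IsSwapPos (σ * swap i i') m) : IsSwapPos σ m := by
  obtain ⟨k, k', j, hk, hk', hj, hjk, hjk'⟩ := h
  have hfix : ∀ x : Fin N, (x : ℕ) ≤ m + 1 → swap i i' x = x := fun x hx =>
    swap_apply_of_ne_of_ne (fun e => by subst e; omega) (fun e => by subst e; omega)
  refine ⟨k, k', swap i i' j, hk, hk', ?_, ?_, ?_⟩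
  · by_contra hle
    have hj' : j = swap i i' j := by simpa using hfix (swap i i' j) (by omega)
    rw [← hj'] at hle
    omega
  · simpa [Perm.mul_apply, hfix k (by omega)] using hjk
  · simpa [Perm.mul_apply, hfix k' (by omega)] using hjk'

/-- If `σ i < σ k`, the later entry witnessing that `n` is a swap position of `σ` serves again;
otherwise the witness `j` for `σ * swap i i'` cannot be `i'`, so it is untouched by the swap. -/
theorem IsSwapPos.of_mul_swap_of_add_one_eq (hi : (i : ℕ) = n) (hi' : (i' : ℕ) = n + 1)
    (hmn : m + 1 = n) (h : IsSwapPos (σ * swap i i') m) (hσ : IsSwapPos σ n) :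
    IsSwapPos σ m := by
  obtain ⟨k, k', j, hk, hk', hj, hjk, hjk'⟩ := h
  obtain ⟨l, l', g, hl, hl', hg, hgl, hgl'⟩ := hσ
  obtain rfl : i = k' := Fin.ext (by omega)
  obtain rfl : i = l := Fin.ext (by omega)
  obtain rfl : i' = l' := Fin.ext (by omega)
  have hki : k ≠ i ∧ k ≠ i' := ⟨fun e => by subst e; omega, fun e => by subst e; omega⟩
  simp only [Perm.mul_apply, swap_apply_of_ne_of_ne hki.1 hki.2, swap_apply_left] at hjk hjk'
  by_cases hik : σ i < σ k
  · exact ⟨k, i, g, hk, hk', by omega, hgl.trans hik, hgl⟩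
  · have hji' : j ≠ i' := by
      rintro rfl
      rw [swap_apply_right] at hjk
      exact hik hjk
    rw [swap_apply_of_ne_of_ne (fun e => by subst e; omega) hji'] at hjk hjk'
    exact ⟨k, i, j, hk, hk', by omega, hjk, hjk.trans_le (not_lt.1 hik)⟩

theorem IsLeftmostSwapPos.mul_swap (hi : (i : ℕ) = n) (hi' : (i' : ℕ) = n + 1)
    (h : IsLeftmostSwapPos σ n) : IsLeftmostSwapPos (σ * swap i i') n := by
  refine ⟨isSwapPos_mul_swap hi hi' h.1, fun m hm hm' => h.2 m hm ?_⟩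
  rcases Nat.lt_or_ge (m + 1) n with hlt | hge
  · exact hm'.of_mul_swap_of_add_one_lt hi hi' hlt
  · exact hm'.of_mul_swap_of_add_one_eq hi hi' (by omega) h.1

open Classical in
noncomputable def swapLeftmost (σ : Perm (Fin N)) : Perm (Fin N) :=
  if h : ∃ n, IsSwapPos σ n then
    σ * swap ⟨Nat.find h, by have := (Nat.find_spec h).add_one_lt; omega⟩
      ⟨Nat.find h + 1, (Nat.find_spec h).add_one_lt⟩
  else σ

theorem IsLeftmostSwapPos.swapLeftmost_eq (hi : (i : ℕ) = n) (hi' : (i' : ℕ) = n + 1)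
    (h : IsLeftmostSwapPos σ n) : swapLeftmost σ = σ * swap i i' := by
  classical
  have hex : ∃ n, IsSwapPos σ n := ⟨n, h.1⟩
  have hfind : Nat.find hex = n :=
    h.unique ⟨Nat.find_spec hex, fun _ => Nat.find_min hex⟩
  rw [swapLeftmost, dif_pos hex]
  congr <;> omega

theorem swapLeftmost_of_forall_not (h : ∀ n, ¬IsSwapPos σ n) : swapLeftmost σ = σ := by
  rw [swapLeftmost, dif_neg (not_exists.2 h)]

theorem swapLeftmost_involutive : Involutive (swapLeftmost (N := N)) := by
  intro σ
  by_cases hex : ∃ n, IsSwapPos σ n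
  · obtain ⟨n, h⟩ := exists_isLeftmostSwapPos hex
    obtain ⟨i, i', -, hi, hi', -⟩ := h.1
    rw [h.swapLeftmost_eq hi hi', (h.mul_swap hi hi').swapLeftmost_eq hi hi', mul_swap_mul_self]
  · have hσ := swapLeftmost_of_forall_not (not_exists.1 hex)
    rw [hσ, hσ]

theorem swapLeftmost_eq_one_iff : swapLeftmost σ = 1 ↔ σ = 1 := by
  have hone : swapLeftmost (1 : Perm (Fin N)) = 1 :=
    swapLeftmost_of_forall_not fun _ => not_isSwapPos_one
  exact ⟨fun h => by rw [← swapLeftmost_involutive σ, h, hone], by rintro rfl; exact hone⟩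

theorem swapLeftmost_ne_self (h : ∃ n, IsSwapPos σ n) : swapLeftmost σ ≠ σ := by
  obtain ⟨n, hn⟩ := exists_isLeftmostSwapPos h
  obtain ⟨i, i', -, hi, hi', -⟩ := hn.1
  rw [hn.swapLeftmost_eq hi hi', Ne, mul_eq_left, swap_eq_one_iff, ← Fin.val_inj]
  omega

theorem pairType_swapLeftmost (h : ∃ n, IsSwapPos σ n) : PairType σ (swapLeftmost σ) := by
  obtain ⟨n, hn⟩ := exists_isLeftmostSwapPos h
  obtain ⟨i, i', j, hi, hi', hj, hji, hji'⟩ := hn.1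
  exact ⟨i, i', j, by omega, hn.swapLeftmost_eq hi hi', hj, hji, hji'⟩

theorem singleType_of_forall_not_isSwapPos (hσ : σ ≠ 1) (h : ∀ n, ¬IsSwapPos σ n) :
    SingleType σ := by
  obtain ⟨p, hp, hmin⟩ := wellFounded_lt.has_min {x | σ x ≠ x}
    (not_forall.1 fun hfix => hσ (Perm.ext hfix))
  have hfix : ∀ x < p, σ x = x := fun x hx => by_contra fun hx' => hmin x hx' hx
  set q := σ.symm p
  have hq : σ q = p := σ.apply_symm_apply p
  have hgt : ∀ k, p ≤ k → k ≠ q → p < σ k := fun k hk hkq =>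
    (Perm.le_apply_of_forall_lt_apply_eq hfix hk).lt_of_ne
      fun e => hkq (σ.injective (e.symm.trans hq.symm))
  have hpq : p < q := by
    rcases lt_trichotomy q p with hlt | heq | hlt
    · exact absurd ((hfix q hlt).symm.trans hq) hlt.ne
    · exact absurd (heq ▸ hq) hp
    · exact hlt
  by_cases hq1 : (q : ℕ) = p + 1
  · exact ⟨q, p, hq1, hq, fun k hk => hgt k (hpq.trans hk).le hk.ne'⟩
  · have hpq' : (p : ℕ) + 2 ≤ q := by have := Fin.lt_def.1 hpq; omega
    refine absurd ?_ (h ((q : ℕ) - 2))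
    refine ⟨⟨q - 2, by omega⟩, ⟨q - 1, by omega⟩, q, rfl, by simp; omega, by simp; omega,
      ?_, ?_⟩ <;> rw [hq] <;> apply hgt <;> simp only [Fin.le_def, ne_eq, Fin.ext_iff] <;> omega

end PermPartition

open PermPartition in
theorem perm_partition_general (N : ℕ) :
    ∃ P : Finset (Finset (Equiv.Perm (Fin N))),
      (∀ B ∈ P, ∀ B' ∈ P, B ≠ B' → Disjoint B B') ∧
      P.biUnion id = Finset.univ.erase 1 ∧
      ∀ B ∈ P,
        (∃ σ, B = {σ} ∧ SingleType σ) ∨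
        (∃ σ σ', σ ≠ σ' ∧ B = {σ, σ'} ∧ PairType σ σ') := by
  set s : Finset (Perm (Fin N)) := Finset.univ.erase 1
  have hmaps : Set.MapsTo swapLeftmost (s : Set (Perm (Fin N))) s := fun σ hσ => by
    simpa [s, swapLeftmost_eq_one_iff] using hσ
  refine ⟨s.image fun σ => {σ, swapLeftmost σ},
    swapLeftmost_involutive.pairwiseDisjoint_image_pair _,
    Finset.biUnion_image_pair_of_mapsTo hmaps, fun B hB => ?_⟩
  obtain ⟨σ, hσ, rfl⟩ := Finset.mem_image.1 hB
  by_cases h : ∃ n, IsSwapPos σ n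
  · exact .inr ⟨σ, _, (swapLeftmost_ne_self h).symm, rfl, pairType_swapLeftmost h⟩
  · have h := not_exists.1 h
    refine .inl ⟨σ, by rw [swapLeftmost_of_forall_not h, Finset.pair_eq_singleton], ?_⟩
    exact singleType_of_forall_not_isSwapPos (Finset.ne_of_mem_erase hσ) h

/-- For every N ≥ 2, the set S_N \ {id} is a disjoint union of blocks, each block
being either a singleton {σ} with σ of singleton type, or a pair {σ, σ'} of pair type. -/
theorem perm_partition (N : ℕ) (hN : 2 ≤ N) :
    ∃ P : Finset (Finset (Equiv.Perm (Fin N))),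
      (∀ B ∈ P, ∀ B' ∈ P, B ≠ B' → Disjoint B B') ∧
      P.biUnion id = Finset.univ.erase 1 ∧
      ∀ B ∈ P,
        (∃ σ, B = {σ} ∧ SingleType σ) ∨
        (∃ σ σ', σ ≠ σ' ∧ B = {σ, σ'} ∧ PairType σ σ') :=
  perm_partition_general N
end

section
/- Let h_σ(ξ_1,…,ξ_N) = ∏_{(b,a) inversion of σ} (ξ_b/ξ_a) · ∏_i ξ_{σ(i)}^{x_i - y_{σ(i)} - 1}, for nonzero variables ξ and integers x_i, y_i. If σ and σ' differ only by interchanging two adjacent entries α and β (at positions i, i+1), and γ ≠ α, β, then after substituting ξ_γ = η/∏_{μ≠γ} ξ_μ, the resulting functions h_σ^γ and h_σ'^γ agree upon setting ξ_α = ξ_β. -/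
open Finset

/-- h_σ(ξ) = ∏_{(b,a) inversion of σ} (ξ_b/ξ_a) · ∏_i ξ_{σ(i)}^{x_i - y_{σ(i)} - 1},
written in the equivalent closed form (Lemma 3.4)
h_σ(ξ) = ∏_i ξ_{σ(i)}^{x_i - y_{σ(i)} - 1 + σ(i) - i}. -/
def hPerm {K : Type*} [Field K] {N : ℕ} (x y : Fin N → ℤ)
    (σ : Equiv.Perm (Fin N)) (ξ : Fin N → K) : K :=
  ∏ i : Fin N, ξ (σ i) ^ (x i - y (σ i) - 1 + (σ i : ℤ) - (i : ℤ))

lemma prod_eq_of_two {K : Type*} [CommMonoid K] {N : ℕ} (f g : Fin N → K)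
    (i i' : Fin N) (hne : i ≠ i')
    (hcongr : ∀ j, j ≠ i → j ≠ i' → f j = g j)
    (hpair : f i * f i' = g i * g i') :
    ∏ j : Fin N, f j = ∏ j : Fin N, g j := by
  have hi' : i ∈ (univ : Finset (Fin N)).erase i' := by
    simp [Finset.mem_erase, hne]
  rw [← Finset.mul_prod_erase univ f (mem_univ i'),
      ← Finset.mul_prod_erase _ f hi',
      ← Finset.mul_prod_erase univ g (mem_univ i'),
      ← Finset.mul_prod_erase _ g hi']
  have : ∏ j ∈ (univ.erase i').erase i, f j = ∏ j ∈ (univ.erase i').erase i, g j := by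
    apply Finset.prod_congr rfl
    intro j hj
    simp only [Finset.mem_erase] at hj
    exact hcongr j hj.1 hj.2.1
  rw [this, ← mul_assoc, ← mul_assoc, mul_comm (f i') (f i), mul_comm (g i') (g i), hpair]

/-- If σ' is obtained from σ by interchanging the two adjacent entries at positions
i and i+1, and γ differs from both interchanged entries, then after substituting
ξ_γ = η / ∏_{μ ≠ γ} ξ_μ the functions h_σ^γ and h_σ'^γ agree upon setting
ξ_{σ i} = ξ_{σ (i+1)}. -/
theorem hPerm_substitution_eq {K : Type*} [Field K] {N : ℕ}
    (x y : Fin N → ℤ) (ξ : Fin N → K) (hξ : ∀ μ, ξ μ ≠ 0) (η : K) (hη : η ≠ 0)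
    (σ : Equiv.Perm (Fin N)) (i i' : Fin N) (hi : (i' : ℕ) = (i : ℕ) + 1)
    (σ' : Equiv.Perm (Fin N)) (hσ' : σ' = σ * Equiv.swap i i')
    (γ : Fin N) (hγa : γ ≠ σ i) (hγb : γ ≠ σ i')
    (heq : ξ (σ i) = ξ (σ i')) :
    hPerm x y σ (Function.update ξ γ (η / ∏ μ ∈ univ.erase γ, ξ μ)) =
    hPerm x y σ' (Function.update ξ γ (η / ∏ μ ∈ univ.erase γ, ξ μ)) := by
  set ξ' : Fin N → K := Function.update ξ γ (η / ∏ μ ∈ univ.erase γ, ξ μ) with hξ'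
  have hne : i ≠ i' := by
    intro h; rw [h] at hi; omega
  have hσi : σ' i = σ i' := by simp [hσ', Equiv.swap_apply_left]
  have hσi' : σ' i' = σ i := by simp [hσ', Equiv.swap_apply_right]
  have hσj : ∀ j, j ≠ i → j ≠ i' → σ' j = σ j := by
    intro j h1 h2; simp [hσ', Equiv.swap_apply_of_ne_of_ne h1 h2]
  have hci : ξ' (σ i) = ξ (σ i) := Function.update_of_ne (Ne.symm hγa) _ ξ
  have hci' : ξ' (σ i') = ξ (σ i') := Function.update_of_ne (Ne.symm hγb) _ ξ
  have hc : ξ' (σ i) = ξ' (σ i') := by rw [hci, hci', heq]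
  have hc0 : ξ' (σ i) ≠ 0 := by rw [hci]; exact hξ _
  unfold hPerm
  apply prod_eq_of_two _ _ i i' hne
  · intro j h1 h2
    rw [hσj j h1 h2]
  · rw [hσi, hσi', ← hc, ← zpow_add₀ hc0, ← zpow_add₀ hc0]
    congr 1
    ring
end

section
/- For the Bethe ansatz two-particle solution u(x_1,x_2) = A_{12} ξ_1^{x_1} ξ_2^{x_2} + A_{21} ξ_1^{x_2} ξ_2^{x_1} (ξ_1, ξ_2 nonzero), the boundary condition u(x,x) = μ·u(x-1,x) + λ·u(x,x+1) holds for all x ∈ ℤ if and only if A_{21}/A_{12} = -(ξ_2/ξ_1)·(μ + λξ_1ξ_2 - ξ_1)/(μ + λξ_1ξ_2 - ξ_2), provided A_{12} ≠ 0 and the denominator μ + λξ_1ξ_2 - ξ_2 ≠ 0. -/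
/-!
Substituting the ansatz, each term of the boundary equation at `x` carries the factor
`(ξ₁ξ₂)^(x-1)`, so the equation is the same for every `x`: it is the single linear relation
`A₁₂ ξ₂ (μ + λξ₁ξ₂ - ξ₁) + A₂₁ ξ₁ (μ + λξ₁ξ₂ - ξ₂) = 0`, which is then solved for `A₂₁ / A₁₂`.
-/

section

variable {K : Type*} [Field K]

lemma div_eq_neg_div_iff_mul_add_mul_eq_zero {a b p q : K} (ha : a ≠ 0) (hq : q ≠ 0) :
    b / a = -(p / q) ↔ a * p + b * q = 0 := by
  rw [div_eq_iff ha, ← neg_div, div_mul_eq_mul_div, eq_div_iff hq]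
  constructor <;> intro h <;> linear_combination h

def betheAnsatz (A12 A21 ξ1 ξ2 : K) (x1 x2 : ℤ) : K :=
  A12 * ξ1 ^ x1 * ξ2 ^ x2 + A21 * ξ1 ^ x2 * ξ2 ^ x1

def boundaryDefect (lam mu : K) (u : ℤ → ℤ → K) (x : ℤ) : K :=
  u x x - (mu * u (x - 1) x + lam * u x (x + 1))

lemma boundaryDefect_eq_zero_iff (lam mu : K) (u : ℤ → ℤ → K) (x : ℤ) :
    boundaryDefect lam mu u x = 0 ↔ u x x = mu * u (x - 1) x + lam * u x (x + 1) :=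
  sub_eq_zero

lemma boundaryDefect_betheAnsatz (lam mu A12 A21 : K) {ξ1 ξ2 : K} (h1 : ξ1 ≠ 0) (h2 : ξ2 ≠ 0)
    (x : ℤ) :
    boundaryDefect lam mu (betheAnsatz A12 A21 ξ1 ξ2) x =
      -(ξ1 * ξ2) ^ (x - 1) * (A12 * (ξ2 * (mu + lam * ξ1 * ξ2 - ξ1))
        + A21 * (ξ1 * (mu + lam * ξ1 * ξ2 - ξ2))) := by
  simp only [boundaryDefect, betheAnsatz, mul_zpow, zpow_sub_one₀ h1, zpow_sub_one₀ h2,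
    zpow_add_one₀ h1, zpow_add_one₀ h2]
  field_simp
  ring

lemma betheAnsatz_boundary_iff (lam mu A12 A21 : K) {ξ1 ξ2 : K} (h1 : ξ1 ≠ 0) (h2 : ξ2 ≠ 0) :
    (∀ x : ℤ, betheAnsatz A12 A21 ξ1 ξ2 x x =
        mu * betheAnsatz A12 A21 ξ1 ξ2 (x - 1) x + lam * betheAnsatz A12 A21 ξ1 ξ2 x (x + 1)) ↔
      A12 * (ξ2 * (mu + lam * ξ1 * ξ2 - ξ1)) + A21 * (ξ1 * (mu + lam * ξ1 * ξ2 - ξ2)) = 0 := by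
  have hpow (x : ℤ) : (ξ1 * ξ2) ^ (x - 1) ≠ 0 := zpow_ne_zero _ (mul_ne_zero h1 h2)
  simp only [← boundaryDefect_eq_zero_iff, boundaryDefect_betheAnsatz lam mu A12 A21 h1 h2,
    neg_mul, neg_eq_zero, mul_eq_zero, hpow, false_or, forall_const]

end

/-- For the Bethe ansatz two-particle solution
u(x₁,x₂) = A₁₂ ξ₁^{x₁} ξ₂^{x₂} + A₂₁ ξ₁^{x₂} ξ₂^{x₁}, the two-sided PushASEP boundary
condition u(x,x) = μ u(x-1,x) + λ u(x,x+1) holds for all x ∈ ℤ iff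
A₂₁/A₁₂ = -(ξ₂/ξ₁)·(μ + λξ₁ξ₂ - ξ₁)/(μ + λξ₁ξ₂ - ξ₂). -/
theorem pushASEP_smatrix {K : Type*} [Field K] (lam mu A12 A21 ξ1 ξ2 : K)
    (hA : A12 ≠ 0) (h1 : ξ1 ≠ 0) (h2 : ξ2 ≠ 0)
    (hden : mu + lam * ξ1 * ξ2 - ξ2 ≠ 0)
    (u : ℤ → ℤ → K)
    (hu : ∀ x1 x2 : ℤ, u x1 x2 = A12 * ξ1 ^ x1 * ξ2 ^ x2 + A21 * ξ1 ^ x2 * ξ2 ^ x1) :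
    (∀ x : ℤ, u x x = mu * u (x - 1) x + lam * u x (x + 1)) ↔
    A21 / A12 = -(ξ2 / ξ1) * ((mu + lam * ξ1 * ξ2 - ξ1) / (mu + lam * ξ1 * ξ2 - ξ2)) := by
  obtain rfl : u = betheAnsatz A12 A21 ξ1 ξ2 := funext₂ hu
  rw [betheAnsatz_boundary_iff lam mu A12 A21 h1 h2, neg_mul, div_mul_div_comm,
    div_eq_neg_div_iff_mul_add_mul_eq_zero hA (mul_ne_zero h1 hden)]
end

section
/- For the Bethe ansatz two-particle solution u(x_1,x_2) = A_{12} ξ_1^{x_1} ξ_2^{x_2} + A_{21} ξ_1^{x_2} ξ_2^{x_1}, the AZRP boundary condition u(x,x) = p·u(x,x-1) + q·u(x+1,x) holds for all x ∈ ℤ if and only if A_{21}/A_{12} = -(ξ_1/ξ_2)·(p + qξ_1ξ_2 - ξ_2)/(p + qξ_1ξ_2 - ξ_1), assuming A_{12} ≠ 0, ξ_1, ξ_2 ≠ 0 and p + qξ_1ξ_2 - ξ_1 ≠ 0. -/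
/-!
Dividing the boundary condition at `x` by `ξ₁^(x-1) ξ₂^(x-1)` leaves one and the same linear relation
`A₂₁ ξ₂ (p + qξ₁ξ₂ - ξ₁) + A₁₂ ξ₁ (p + qξ₁ξ₂ - ξ₂) = 0` for every `x`, which is the stated value of
`A₂₁ / A₁₂` once cleared of denominators.
-/

theorem bethe_boundary_residual {K : Type*} [Field K] (p q A12 A21 ξ1 ξ2 : K)
    (h1 : ξ1 ≠ 0) (h2 : ξ2 ≠ 0) (x : ℤ) :
    A12 * ξ1 ^ x * ξ2 ^ x + A21 * ξ1 ^ x * ξ2 ^ x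
      - (p * (A12 * ξ1 ^ x * ξ2 ^ (x - 1) + A21 * ξ1 ^ (x - 1) * ξ2 ^ x)
        + q * (A12 * ξ1 ^ (x + 1) * ξ2 ^ x + A21 * ξ1 ^ x * ξ2 ^ (x + 1)))
      = -(ξ1 ^ (x - 1) * ξ2 ^ (x - 1)) *
          (A21 * ξ2 * (p + q * ξ1 * ξ2 - ξ1) + A12 * ξ1 * (p + q * ξ1 * ξ2 - ξ2)) := by
  obtain ⟨y, rfl⟩ : ∃ y, x = y + 1 := ⟨x - 1, by ring⟩
  simp only [add_sub_cancel_right, zpow_add_one₀ h1, zpow_add_one₀ h2]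
  ring

theorem bethe_boundary_iff {K : Type*} [Field K] (p q A12 A21 ξ1 ξ2 : K)
    (h1 : ξ1 ≠ 0) (h2 : ξ2 ≠ 0) (x : ℤ) :
    A12 * ξ1 ^ x * ξ2 ^ x + A21 * ξ1 ^ x * ξ2 ^ x
        = p * (A12 * ξ1 ^ x * ξ2 ^ (x - 1) + A21 * ξ1 ^ (x - 1) * ξ2 ^ x)
          + q * (A12 * ξ1 ^ (x + 1) * ξ2 ^ x + A21 * ξ1 ^ x * ξ2 ^ (x + 1)) ↔
      A21 * ξ2 * (p + q * ξ1 * ξ2 - ξ1) + A12 * ξ1 * (p + q * ξ1 * ξ2 - ξ2) = 0 := by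
  have hscale : -(ξ1 ^ (x - 1) * ξ2 ^ (x - 1)) ≠ 0 :=
    neg_ne_zero.mpr (mul_ne_zero (zpow_ne_zero _ h1) (zpow_ne_zero _ h2))
  rw [← sub_eq_zero, bethe_boundary_residual p q A12 A21 ξ1 ξ2 h1 h2 x,
    mul_eq_zero, or_iff_right hscale]

theorem div_eq_neg_div_mul_div_iff {K : Type*} [Field K] {a b c d e f : K}
    (hb : b ≠ 0) (hd : d ≠ 0) (hf : f ≠ 0) :
    a / b = -(c / d) * (e / f) ↔ a * d * f + b * c * e = 0 := by
  rw [div_eq_iff hb]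
  field_simp
  constructor <;> intro h <;> linear_combination h

/-- For the Bethe ansatz two-particle solution
u(x₁,x₂) = A₁₂ ξ₁^{x₁} ξ₂^{x₂} + A₂₁ ξ₁^{x₂} ξ₂^{x₁}, the AZRP boundary condition
u(x,x) = p u(x,x-1) + q u(x+1,x) holds for all x ∈ ℤ iff
A₂₁/A₁₂ = -(ξ₁/ξ₂)·(p + qξ₁ξ₂ - ξ₂)/(p + qξ₁ξ₂ - ξ₁). -/
theorem azrp_smatrix {K : Type*} [Field K] (p q A12 A21 ξ1 ξ2 : K)
    (hA : A12 ≠ 0) (h1 : ξ1 ≠ 0) (h2 : ξ2 ≠ 0)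
    (hden : p + q * ξ1 * ξ2 - ξ1 ≠ 0)
    (u : ℤ → ℤ → K)
    (hu : ∀ x1 x2 : ℤ, u x1 x2 = A12 * ξ1 ^ x1 * ξ2 ^ x2 + A21 * ξ1 ^ x2 * ξ2 ^ x1) :
    (∀ x : ℤ, u x x = p * u x (x - 1) + q * u (x + 1) x) ↔
    A21 / A12 = -(ξ1 / ξ2) * ((p + q * ξ1 * ξ2 - ξ2) / (p + q * ξ1 * ξ2 - ξ1)) := by
  simp only [hu, bethe_boundary_iff p q A12 A21 ξ1 ξ2 h1 h2, forall_const]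
  rw [div_eq_neg_div_mul_div_iff hA h2 hden]
end

section
/- For the Bethe ansatz two-particle solution u(x_1,x_2) = A_{12} ξ_1^{x_1} ξ_2^{x_2} + A_{21} ξ_1^{x_2} ξ_2^{x_1}, the ASAP boundary condition u(x,x) = λ·u(x-1,x) + μ·u(x-1,x-1) holds for all x ∈ ℤ if and only if A_{21}/A_{12} = -(μ + λξ_2 - ξ_1ξ_2)/(μ + λξ_1 - ξ_1ξ_2), assuming A_{12} ≠ 0, ξ_1, ξ_2 ≠ 0, λ + μ = 1, and μ + λξ_1 - ξ_1ξ_2 ≠ 0. -/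
/-!
Writing `t = ξ₁ ξ₂`, each term of the Bethe ansatz scales by `t` when both coordinates are
shifted by one, so the defect `u(x,x) - λ u(x-1,x) - μ u(x-1,x-1)` of the boundary condition is
`-t^(x-1)` times the constant `A₁₂ (μ + λξ₂ - ξ₁ξ₂) + A₂₁ (μ + λξ₁ - ξ₁ξ₂)`. As `t ≠ 0`, the
boundary condition holds for all `x` iff that constant vanishes, which is the stated ratio.
-/

section

variable {K : Type*} [Field K]

theorem add_mul_eq_zero_iff_div_eq_neg_div {a b c d : K} (ha : a ≠ 0) (hd : d ≠ 0) :
    a * b + c * d = 0 ↔ c / a = -(b / d) := by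
  rw [← neg_div, div_eq_div_iff ha hd]
  constructor <;> intro h <;> linear_combination h

theorem bethe_boundary_defect (lam mu A12 A21 ξ1 ξ2 : K) (h1 : ξ1 ≠ 0) (h2 : ξ2 ≠ 0)
    (u : ℤ → ℤ → K)
    (hu : ∀ x1 x2 : ℤ, u x1 x2 = A12 * ξ1 ^ x1 * ξ2 ^ x2 + A21 * ξ1 ^ x2 * ξ2 ^ x1) (x : ℤ) :
    u x x - (lam * u (x - 1) x + mu * u (x - 1) (x - 1)) =
      -(ξ1 * ξ2) ^ (x - 1) *
        (A12 * (mu + lam * ξ2 - ξ1 * ξ2) + A21 * (mu + lam * ξ1 - ξ1 * ξ2)) := by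
  have hx : x = (x - 1) + 1 := by ring
  simp only [hu]
  rw [hx, zpow_add_one₀ h1, zpow_add_one₀ h2, add_sub_cancel_right, mul_zpow]
  ring

end

theorem asap_smatrix_general {K : Type*} [Field K] (lam mu A12 A21 ξ1 ξ2 : K)
    (hA : A12 ≠ 0) (h1 : ξ1 ≠ 0) (h2 : ξ2 ≠ 0)
    (hden : mu + lam * ξ1 - ξ1 * ξ2 ≠ 0)
    (u : ℤ → ℤ → K)
    (hu : ∀ x1 x2 : ℤ, u x1 x2 = A12 * ξ1 ^ x1 * ξ2 ^ x2 + A21 * ξ1 ^ x2 * ξ2 ^ x1) :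
    (∀ x : ℤ, u x x = lam * u (x - 1) x + mu * u (x - 1) (x - 1)) ↔
    A21 / A12 = -((mu + lam * ξ2 - ξ1 * ξ2) / (mu + lam * ξ1 - ξ1 * ξ2)) := by
  have ht : ξ1 * ξ2 ≠ 0 := mul_ne_zero h1 h2
  calc (∀ x : ℤ, u x x = lam * u (x - 1) x + mu * u (x - 1) (x - 1))
      ↔ ∀ x : ℤ, -(ξ1 * ξ2) ^ (x - 1) *
          (A12 * (mu + lam * ξ2 - ξ1 * ξ2) + A21 * (mu + lam * ξ1 - ξ1 * ξ2)) = 0 := by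
        simp only [← bethe_boundary_defect lam mu A12 A21 ξ1 ξ2 h1 h2 u hu, sub_eq_zero]
    _ ↔ A12 * (mu + lam * ξ2 - ξ1 * ξ2) + A21 * (mu + lam * ξ1 - ξ1 * ξ2) = 0 := by
        simp [zpow_ne_zero _ ht]
    _ ↔ _ := add_mul_eq_zero_iff_div_eq_neg_div hA hden

/-- For the Bethe ansatz two-particle solution
u(x₁,x₂) = A₁₂ ξ₁^{x₁} ξ₂^{x₂} + A₂₁ ξ₁^{x₂} ξ₂^{x₁}, the ASAP boundary condition
u(x,x) = λ u(x-1,x) + μ u(x-1,x-1) holds for all x ∈ ℤ iff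
A₂₁/A₁₂ = -(μ + λξ₂ - ξ₁ξ₂)/(μ + λξ₁ - ξ₁ξ₂). -/
theorem asap_smatrix {K : Type*} [Field K] (lam mu A12 A21 ξ1 ξ2 : K)
    (hA : A12 ≠ 0) (h1 : ξ1 ≠ 0) (h2 : ξ2 ≠ 0)
    (hsum : lam + mu = 1)
    (hden : mu + lam * ξ1 - ξ1 * ξ2 ≠ 0)
    (u : ℤ → ℤ → K)
    (hu : ∀ x1 x2 : ℤ, u x1 x2 = A12 * ξ1 ^ x1 * ξ2 ^ x2 + A21 * ξ1 ^ x2 * ξ2 ^ x1) :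
    (∀ x : ℤ, u x x = lam * u (x - 1) x + mu * u (x - 1) (x - 1)) ↔
    A21 / A12 = -((mu + lam * ξ2 - ξ1 * ξ2) / (mu + lam * ξ1 - ξ1 * ξ2)) :=
  asap_smatrix_general lam mu A12 A21 ξ1 ξ2 hA h1 h2 hden u hu
end
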